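/- arXiv:1404.0785 — 2 statements merged into one kernel-verified Lean document; each statement's English description precedes it below -/
import Mathlib

section
/- Let L be the real Lie algebra of complex 4×4 matrices of the form [[x, u, v, i·w], [0, y, i·z, −conj(v)], [0, 0, −y, −conj(u)], [0, 0, 0, −x]] (x, y, z, w ∈ ℝ, u, v ∈ ℂ) under the commutator bracket. Then the derived algebra [L, L] equals the subalgebra 𝔫 = {A ∈ L : x = 0 and y = 0}, which has real dimension 6 (so [L,L] has codimension 2 in L), and L is a solvable Lie algebra. -/
open Matrix

attribute [local instance 100] LieRing.ofAssociativeRing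

/-- The matrix `[[x, u, v, i·w], [0, y, i·z, −v̄], [0, 0, −y, −ū], [0, 0, 0, −x]]`. -/
def matL (x y z w : ℝ) (u v : ℂ) : Matrix (Fin 4) (Fin 4) ℂ :=
  !![(x : ℂ), u, v, Complex.I * (w : ℂ);
     0, (y : ℂ), Complex.I * (z : ℂ), -(star v);
     0, 0, -(y : ℂ), -(star u);
     0, 0, 0, -(x : ℂ)]

/-- The set `L` of all matrices of the above form. -/
def Lset : Set (Matrix (Fin 4) (Fin 4) ℂ) :=
  {A | ∃ (x y z w : ℝ) (u v : ℂ), A = matL x y z w u v}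

/-!
A bracket of two elements of `L` has zero diagonal, and the diagonal elements `matL 1 0 0 0 0 0`,
`matL 0 1 0 0 0 0` act on `𝔫` with nonzero weights, so `[L, L] = 𝔫`. Solvability is then a
statement about strictly upper triangular matrices: the bracket of a matrix vanishing below the
`a`-th superdiagonal with one vanishing below the `b`-th superdiagonal vanishes below the
`(a + b)`-th, so the `k`-th derived algebra of `L` vanishes below the `k`-th superdiagonal, and is
zero once `k ≥ 4`.
-/

namespace Matrix

variable {α : Type*} {n : ℕ}

def upperBand (R : Type*) [Semiring R] [AddCommMonoid α] [Module R α] (k : ℕ) :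
    Submodule R (Matrix (Fin n) (Fin n) α) where
  carrier := {A | ∀ i j : Fin n, (j : ℕ) < i + k → A i j = 0}
  add_mem' hA hB i j h := by simp [hA i j h, hB i j h]
  zero_mem' _ _ _ := rfl
  smul_mem' c A hA i j h := by simp [hA i j h]

variable {R : Type*}

theorem upperBand_antitone [Semiring R] [AddCommMonoid α] [Module R α] :
    Antitone (upperBand (α := α) (n := n) R) :=
  fun _ _ hkl _ hA i j h => hA i j (by omega)

theorem upperBand_eq_bot [Semiring R] [AddCommMonoid α] [Module R α] {k : ℕ} (hk : n ≤ k) :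
    upperBand (α := α) (n := n) R k = ⊥ := by
  refine (Submodule.eq_bot_iff _).2 fun A hA => ?_
  ext i j
  exact hA i j (by omega)

theorem mul_mem_upperBand [Semiring R] [NonUnitalNonAssocSemiring α] [Module R α] {a b : ℕ}
    {A B : Matrix (Fin n) (Fin n) α} (hA : A ∈ upperBand R a) (hB : B ∈ upperBand R b) :
    A * B ∈ upperBand R (a + b) := by
  intro i j hij
  rw [mul_apply]
  refine Finset.sum_eq_zero fun l _ => ?_
  by_cases hl : (l : ℕ) < i + a
  · simp [hA i l hl]
  · simp [hB l j (by omega)]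

theorem lie_mem_upperBand [Ring R] [Ring α] [Module R α] {a b : ℕ}
    {A B : Matrix (Fin n) (Fin n) α} (hA : A ∈ upperBand R a) (hB : B ∈ upperBand R b) :
    ⁅A, B⁆ ∈ upperBand R (a + b) := by
  rw [Ring.lie_def]
  exact sub_mem (mul_mem_upperBand hA hB) (add_comm b a ▸ mul_mem_upperBand hB hA)

end Matrix

theorem LieAlgebra.derivedSeries_succ_toSubmodule_le {R L : Type*} [CommRing R] [LieRing L]
    [LieAlgebra R L] {k : ℕ} {S T : Submodule R L}
    (hS : (derivedSeries R L k).toSubmodule ≤ S) (hST : ∀ a ∈ S, ∀ b ∈ S, ⁅a, b⁆ ∈ T) :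
    (derivedSeries R L (k + 1)).toSubmodule ≤ T := by
  rw [derivedSeries_def, derivedSeriesOfIdeal_succ, ← derivedSeries_def,
    LieSubmodule.lieIdeal_oper_eq_linear_span', Submodule.span_le]
  rintro _ ⟨a, ha, b, hb, rfl⟩
  exact hST a (hS ha) b (hS hb)

namespace LieSubalgebra

variable {R α : Type*} [CommRing R] [Ring α] [Algebra R α] {n : ℕ}
  (L' : LieSubalgebra R (Matrix (Fin n) (Fin n) α))

theorem derivedSeries_le_comap_upperBand
    (h : (LieAlgebra.derivedSeries R L' 1).toSubmodule ≤
      (Matrix.upperBand R 1).comap L'.incl.toLinearMap) (k : ℕ) :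
    (LieAlgebra.derivedSeries R L' (k + 1)).toSubmodule ≤
      (Matrix.upperBand R (k + 1)).comap L'.incl.toLinearMap := by
  induction k with
  | zero => exact h
  | succ k ih =>
    refine LieAlgebra.derivedSeries_succ_toSubmodule_le ih fun a ha b hb => ?_
    exact Matrix.upperBand_antitone (R := R) (by omega) (Matrix.lie_mem_upperBand ha hb)

theorem isSolvable_of_derivedSeries_le_upperBand_one
    (h : (LieAlgebra.derivedSeries R L' 1).toSubmodule ≤
      (Matrix.upperBand R 1).comap L'.incl.toLinearMap) :
    LieAlgebra.IsSolvable L' := by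
  refine (LieAlgebra.isSolvable_iff R L').2 ⟨n + 1, ?_⟩
  have := derivedSeries_le_comap_upperBand L' h n
  rwa [Matrix.upperBand_eq_bot (by omega), Submodule.comap_bot,
    LinearMap.ker_eq_bot.2 Subtype.val_injective, le_bot_iff,
    LieSubmodule.toSubmodule_eq_bot] at this

end LieSubalgebra

theorem matL_add (x y z w x' y' z' w' : ℝ) (u v u' v' : ℂ) :
    matL x y z w u v + matL x' y' z' w' u' v'
      = matL (x + x') (y + y') (z + z') (w + w') (u + u') (v + v') := by
  ext i j
  fin_cases i <;> fin_cases j <;> simp [matL] <;> ring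

theorem matL_smul (r x y z w : ℝ) (u v : ℂ) :
    r • matL x y z w u v = matL (r * x) (r * y) (r * z) (r * w) (r • u) (r • v) := by
  ext i j
  fin_cases i <;> fin_cases j <;> simp [matL, Complex.real_smul] <;> ring

theorem matL_lie (x y z w X Y Z W : ℝ) (u v U V : ℂ) :
    ⁅matL x y z w u v, matL X Y Z W U V⁆
      = matL 0 0 (2 * (y * Z - Y * z))
          (2 * x * W - 2 * X * w - 2 * (u * star V).im - 2 * (v * star U).im)
          ((x - y) • U - (X - Y) • u)
          ((x + y) • V - (X + Y) • v + Complex.I * (u * Z - U * z)) := by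
  rw [Ring.lie_def]
  ext i j
  fin_cases i <;> fin_cases j <;>
    simp only [matL, Matrix.mul_apply, Fin.sum_univ_four, Matrix.sub_apply, Matrix.of_apply,
      Matrix.cons_val', Matrix.cons_val_zero, Matrix.cons_val_one, Matrix.cons_val_two,
      Matrix.cons_val_three, Matrix.empty_val', Matrix.cons_val_fin_one, Complex.real_smul] <;>
    (apply Complex.ext <;> simp <;> ring)

noncomputable def matLₗ : (ℝ × ℝ × ℝ × ℝ × ℂ × ℂ) →ₗ[ℝ] Matrix (Fin 4) (Fin 4) ℂ where
  toFun p := matL p.1 p.2.1 p.2.2.1 p.2.2.2.1 p.2.2.2.2.1 p.2.2.2.2.2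
  map_add' _ _ := (matL_add ..).symm
  map_smul' _ _ := (matL_smul ..).symm

theorem matLₗ_injective : Function.Injective matLₗ := by
  rintro ⟨x, y, z, w, u, v⟩ ⟨x', y', z', w', u', v'⟩ h
  have entry (i j : Fin 4) := congrFun (congrFun h i) j
  have h00 := entry 0 0
  have h01 := entry 0 1
  have h02 := entry 0 2
  have h03 := entry 0 3
  have h11 := entry 1 1
  have h12 := entry 1 2
  simp [matLₗ, matL] at h00 h01 h02 h03 h11 h12
  simp [h00, h01, h02, h03, h11, h12]

noncomputable def Lalg : LieSubalgebra ℝ (Matrix (Fin 4) (Fin 4) ℂ) :=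
  { LinearMap.range matLₗ with
    lie_mem' := by
      rintro _ _ ⟨⟨x, y, z, w, u, v⟩, rfl⟩ ⟨⟨X, Y, Z, W, U, V⟩, rfl⟩
      exact ⟨(0, 0, _, _, _, _), (matL_lie ..).symm⟩ }

theorem coe_Lalg : (Lalg : Set (Matrix (Fin 4) (Fin 4) ℂ)) = Lset := by
  ext A
  constructor
  · rintro ⟨⟨x, y, z, w, u, v⟩, rfl⟩
    exact ⟨x, y, z, w, u, v, rfl⟩
  · rintro ⟨x, y, z, w, u, v, rfl⟩
    exact ⟨(x, y, z, w, u, v), rfl⟩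

theorem finrank_Lalg : Module.finrank ℝ Lalg = 8 := by
  change Module.finrank ℝ (LinearMap.range matLₗ) = 8
  rw [LinearMap.finrank_range_of_inj matLₗ_injective]
  simp [Module.finrank_prod, Complex.finrank_real_complex]

namespace Lalg

noncomputable def ofCoords : (ℝ × ℝ × ℝ × ℝ × ℂ × ℂ) →ₗ[ℝ] Lalg :=
  matLₗ.codRestrict Lalg.toSubmodule fun p => ⟨p, rfl⟩

theorem ofCoords_injective : Function.Injective ofCoords :=
  fun _ _ h => matLₗ_injective (congrArg Subtype.val h)

theorem ofCoords_surjective : Function.Surjective ofCoords := by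
  rintro ⟨_, p, rfl⟩
  exact ⟨p, rfl⟩

/-- The ideal `𝔫` of the paper, the elements with `x = y = 0`, in the coordinates `(z, w, u, v)`. -/
noncomputable def strictUpper : Submodule ℝ Lalg :=
  LinearMap.range (ofCoords ∘ₗ LinearMap.inr ℝ ℝ _ ∘ₗ LinearMap.inr ℝ ℝ _)

theorem mem_strictUpper {A : Lalg} :
    A ∈ strictUpper ↔
      ∃ (z w : ℝ) (u v : ℂ), (A : Matrix (Fin 4) (Fin 4) ℂ) = matL 0 0 z w u v := by
  constructor
  · rintro ⟨⟨z, w, u, v⟩, rfl⟩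
    exact ⟨z, w, u, v, rfl⟩
  · rintro ⟨z, w, u, v, hA⟩
    exact ⟨(z, w, u, v), Subtype.ext hA.symm⟩

theorem finrank_strictUpper : Module.finrank ℝ strictUpper = 6 := by
  rw [strictUpper, LinearMap.finrank_range_of_inj]
  · simp [Module.finrank_prod, Complex.finrank_real_complex]
  · exact ofCoords_injective.comp (LinearMap.inr_injective.comp LinearMap.inr_injective)

theorem lie_mem_strictUpper (A B : Lalg) : ⁅A, B⁆ ∈ strictUpper := by
  obtain ⟨⟨x, y, z, w, u, v⟩, rfl⟩ := ofCoords_surjective A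
  obtain ⟨⟨X, Y, Z, W, U, V⟩, rfl⟩ := ofCoords_surjective B
  exact mem_strictUpper.2 ⟨_, _, _, _, matL_lie x y z w X Y Z W u v U V⟩

theorem strictUpper_le_derivedSeries_one :
    strictUpper ≤ (LieAlgebra.derivedSeries ℝ Lalg 1).toSubmodule := by
  rintro _ ⟨⟨z, w, u, v⟩, rfl⟩
  -- `ad (matL 1 0 0 0 0 0)` scales `(w, u, v)` by `(2, 1, 1)` and kills `z`;
  -- `ad (matL 0 1 0 0 0 0)` scales `(z, u, v)` by `(2, -1, 1)` and kills `w`.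
  have decomp : ofCoords (0, 0, z, w, u, v)
      = ⁅ofCoords (1, 0, 0, 0, 0, 0), ofCoords (0, 0, 0, w / 2, u / 2, v / 2)⁆
        + ⁅ofCoords (0, 1, 0, 0, 0, 0), ofCoords (0, 0, z / 2, 0, -(u / 2), v / 2)⁆ := by
    apply Subtype.ext
    change matL 0 0 z w u v = ⁅matL 1 0 0 0 0 0, matL 0 0 0 (w / 2) (u / 2) (v / 2)⁆
      + ⁅matL 0 1 0 0 0 0, matL 0 0 (z / 2) 0 (-(u / 2)) (v / 2)⁆
    rw [matL_lie, matL_lie, matL_add]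
    congr 1 <;> simp <;> ring
  have top_lie_top : LieAlgebra.derivedSeries ℝ Lalg 1 = ⁅(⊤ : LieIdeal ℝ Lalg), ⊤⁆ := rfl
  simp only [LinearMap.coe_comp, Function.comp_apply, LinearMap.inr_apply, decomp,
    LieSubmodule.mem_toSubmodule, top_lie_top]
  exact add_mem (LieSubmodule.lie_mem_lie trivial trivial) (LieSubmodule.lie_mem_lie trivial trivial)

theorem derivedSeries_one_eq_strictUpper :
    (LieAlgebra.derivedSeries ℝ Lalg 1).toSubmodule = strictUpper :=
  le_antisymm
    (LieAlgebra.derivedSeries_succ_toSubmodule_le le_top fun A _ B _ => lie_mem_strictUpper A B)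
    strictUpper_le_derivedSeries_one

theorem strictUpper_le_upperBand_one :
    strictUpper ≤ (Matrix.upperBand ℝ 1).comap Lalg.incl.toLinearMap := by
  rintro _ ⟨⟨z, w, u, v⟩, rfl⟩
  change matL 0 0 z w u v ∈ Matrix.upperBand ℝ 1
  intro i j hij
  fin_cases i <;> fin_cases j <;> simp_all [matL]

end Lalg

/-- `L` is a real Lie algebra (a Lie subalgebra of the complex 4×4 matrices with
the commutator bracket over ℝ) whose derived algebra `[L,L]` equals
`𝔫 = {A ∈ L : x = 0 and y = 0}`, of real dimension 6 (so of codimension 2 in the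
8-dimensional `L`), and `L` is solvable. -/
theorem stmt3 :
    ∃ Lalg : LieSubalgebra ℝ (Matrix (Fin 4) (Fin 4) ℂ),
      (Lalg : Set (Matrix (Fin 4) (Fin 4) ℂ)) = Lset ∧
      ((LieAlgebra.derivedSeries ℝ Lalg 1 : Set Lalg)
          = {A : Lalg | ∃ (z w : ℝ) (u v : ℂ),
              (A : Matrix (Fin 4) (Fin 4) ℂ) = matL 0 0 z w u v}) ∧
      Module.finrank ℝ (LieAlgebra.derivedSeries ℝ Lalg 1) = 6 ∧
      Module.finrank ℝ Lalg = 8 ∧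
      LieAlgebra.IsSolvable Lalg := by
  have derived := Lalg.derivedSeries_one_eq_strictUpper
  refine ⟨Lalg, coe_Lalg, ?_, ?_, finrank_Lalg, ?_⟩
  · ext A
    exact (SetLike.ext_iff.1 derived A).trans Lalg.mem_strictUpper
  · rw [← Lalg.finrank_strictUpper, ← derived]
    rfl
  · exact LieSubalgebra.isSolvable_of_derivedSeries_le_upperBand_one Lalg
      (derived ▸ Lalg.strictUpper_le_upperBand_one)
end

section
/- Let L be the real Lie algebra of complex 4×4 matrices of the form [[x, u, v, i·w], [0, y, i·z, −conj(v)], [0, 0, −y, −conj(u)], [0, 0, 0, −x]] (x, y, z, w ∈ ℝ, u, v ∈ ℂ) under the commutator bracket, and let 𝔫 = {A ∈ L : x = 0, y = 0} be its derived algebra. Then 𝔫 is nilpotent and 3-step nilpotent: 𝔫' = [𝔫,𝔫] = {A ∈ 𝔫 : u = 0, z = 0} has real dimension 3; 𝔫^{(2)} = [𝔫,𝔫'] = {A ∈ 𝔫 : u = 0, v = 0, z = 0} has real dimension 1; and [𝔫, 𝔫^{(2)}] = 0. -/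
/-! In the coordinates `(z, w, u, v)` of `𝔫` the bracket reads
`⁅(z, w, u, v), (z', w', u', v')⁆ = (0, 2 Im(ū v' - ū' v), 0, i (u z' - u' z))`.
So every bracket lies in the `(w, v)`-plane, brackets with that plane lie on the `w`-axis, and the
`w`-axis is central. Conversely `(0, w, 0, v)` is the sum of the brackets of `(0, 0, 1, 0)` with
`(0, 0, 0, i w / 2)` and of `(0, 0, -i v, 0)` with `(1, 0, 0, 0)`. -/

open Matrix

attribute [local instance 100] LieRing.ofAssociativeRing

/-- The set `𝔫 = {A ∈ L : x = 0, y = 0}`, the derived algebra of `L`. -/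
def Nset : Set (Matrix (Fin 4) (Fin 4) ℂ) :=
  {A | ∃ (z w : ℝ) (u v : ℂ), A = matL 0 0 z w u v}

theorem LieSubmodule.finrank_eq_of_mem_iff_mem_range {R L V : Type*} [Field R] [LieRing L]
    [LieAlgebra R L] [AddCommGroup V] [Module R V] {N : LieSubalgebra R L}
    {S : LieSubmodule R N N} {f : V →ₗ[R] L} (hf : Function.Injective f)
    (hfN : LinearMap.range f ≤ N.toSubmodule) (hS : ∀ A : N, A ∈ S ↔ (A : L) ∈ LinearMap.range f) :
    Module.finrank R S = Module.finrank R V := by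
  have hS' : S.toSubmodule = (LinearMap.range f).comap N.toSubmodule.subtype := Submodule.ext hS
  change Module.finrank R S.toSubmodule = _
  rw [hS']
  exact (Submodule.comapSubtypeEquivOfLe hfN).finrank_eq.trans (LinearMap.finrank_range_of_inj hf)

lemma matL_zero_zero_add (z w : ℝ) (u v : ℂ) (z' w' : ℝ) (u' v' : ℂ) :
    matL 0 0 z w u v + matL 0 0 z' w' u' v' = matL 0 0 (z + z') (w + w') (u + u') (v + v') := by
  ext i j
  fin_cases i <;> fin_cases j <;> simp [matL] <;> ring

lemma smul_matL_zero_zero (r z w : ℝ) (u v : ℂ) :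
    r • matL 0 0 z w u v = matL 0 0 (r * z) (r * w) (r • u) (r • v) := by
  ext i j
  fin_cases i <;> fin_cases j <;> simp [matL, Complex.real_smul] <;> ring

lemma matL_zero : matL 0 0 0 0 0 0 = 0 := by
  ext i j
  fin_cases i <;> fin_cases j <;> simp [matL]

lemma lie_matL_zero_zero (z w : ℝ) (u v : ℂ) (z' w' : ℝ) (u' v' : ℂ) :
    ⁅matL 0 0 z w u v, matL 0 0 z' w' u' v'⁆ =
      matL 0 0 0 (2 * ((star u * v').im - (star u' * v).im)) 0
        (Complex.I * (u * z' - u' * z)) := by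
  rw [Ring.lie_def]
  ext i j
  fin_cases i <;> fin_cases j <;>
    simp [matL, Complex.ext_iff] <;> ring_nf <;> simp

def 𝔫 : LieSubalgebra ℝ (Matrix (Fin 4) (Fin 4) ℂ) where
  carrier := Nset
  add_mem' := by
    rintro _ _ ⟨z, w, u, v, rfl⟩ ⟨z', w', u', v', rfl⟩
    exact ⟨_, _, _, _, matL_zero_zero_add z w u v z' w' u' v'⟩
  zero_mem' := ⟨0, 0, 0, 0, matL_zero.symm⟩
  smul_mem' := by
    rintro r _ ⟨z, w, u, v, rfl⟩
    exact ⟨_, _, _, _, smul_matL_zero_zero r z w u v⟩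
  lie_mem' := by
    rintro _ _ ⟨z, w, u, v, rfl⟩ ⟨z', w', u', v', rfl⟩
    exact ⟨_, _, _, _, lie_matL_zero_zero z w u v z' w' u' v'⟩

lemma matL_mem_𝔫 (z w : ℝ) (u v : ℂ) : matL 0 0 z w u v ∈ 𝔫 := ⟨z, w, u, v, rfl⟩

def wvMat : ℝ × ℂ →ₗ[ℝ] Matrix (Fin 4) (Fin 4) ℂ where
  toFun p := matL 0 0 0 p.1 0 p.2
  map_add' p q := by simp [matL_zero_zero_add]
  map_smul' r p := by simp [smul_matL_zero_zero]

lemma wvMat_injective : Function.Injective wvMat := by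
  rintro ⟨w, v⟩ ⟨w', v'⟩ h
  have hw := congr_fun₂ h 0 3
  have hv := congr_fun₂ h 0 2
  simp [wvMat, matL] at hw hv
  simp [hw, hv]

lemma range_wvMat_le : LinearMap.range wvMat ≤ 𝔫.toSubmodule := by
  rintro _ ⟨p, rfl⟩
  exact matL_mem_𝔫 _ _ _ _

lemma mem_range_wvMat_iff (A : Matrix (Fin 4) (Fin 4) ℂ) :
    A ∈ LinearMap.range wvMat ↔ ∃ (w : ℝ) (v : ℂ), A = matL 0 0 0 w 0 v := by
  simp [wvMat, eq_comm]

lemma mem_range_wvMat_inl_iff (A : Matrix (Fin 4) (Fin 4) ℂ) :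
    A ∈ LinearMap.range (wvMat ∘ₗ LinearMap.inl ℝ ℝ ℂ) ↔ ∃ w : ℝ, A = matL 0 0 0 w 0 0 := by
  simp [wvMat, eq_comm]

open LieModule

lemma lie_matL_u_one (w : ℝ) :
    ⁅matL 0 0 0 0 1 0, matL 0 0 0 0 0 (Complex.I * (w / 2))⁆ = matL 0 0 0 w 0 0 := by
  rw [lie_matL_zero_zero]
  congr 1 <;> simp [mul_div_cancel₀]

lemma lie_matL_z_one (v : ℂ) :
    ⁅matL 0 0 0 0 (-(Complex.I * v)) 0, matL 0 0 1 0 0 0⁆ = matL 0 0 0 0 0 v := by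
  rw [lie_matL_zero_zero]
  congr 1 <;> simp [← mul_assoc]

lemma mem_lowerCentralSeries_one_iff (A : 𝔫) :
    A ∈ lowerCentralSeries ℝ 𝔫 𝔫 1 ↔ (A : Matrix (Fin 4) (Fin 4) ℂ) ∈ LinearMap.range wvMat := by
  constructor
  · suffices (lowerCentralSeries ℝ 𝔫 𝔫 1).toSubmodule ≤
        (LinearMap.range wvMat).comap 𝔫.toSubmodule.subtype from fun hA ↦ this hA
    rw [lowerCentralSeries_succ, LieSubmodule.lieIdeal_oper_eq_linear_span', Submodule.span_le]
    rintro _ ⟨⟨_, z, w, u, v, rfl⟩, -, ⟨_, z', w', u', v', rfl⟩, -, rfl⟩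
    exact ⟨(_, _), (lie_matL_zero_zero z w u v z' w' u' v').symm⟩
  · rintro ⟨⟨w, v⟩, hA⟩
    have hsum : A = ⁅(⟨_, matL_mem_𝔫 0 0 1 0⟩ : 𝔫), ⟨_, matL_mem_𝔫 0 0 0 (Complex.I * (w / 2))⟩⁆
        + ⁅(⟨_, matL_mem_𝔫 0 0 (-(Complex.I * v)) 0⟩ : 𝔫), ⟨_, matL_mem_𝔫 1 0 0 0⟩⁆ := by
      ext1
      rw [AddMemClass.coe_add, LieSubalgebra.coe_bracket, LieSubalgebra.coe_bracket,
        lie_matL_u_one, lie_matL_z_one, matL_zero_zero_add]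
      simpa [wvMat] using hA.symm
    rw [hsum]
    exact add_mem (LieSubmodule.lie_mem_lie trivial trivial)
      (LieSubmodule.lie_mem_lie trivial trivial)

lemma mem_lowerCentralSeries_two_iff (A : 𝔫) :
    A ∈ lowerCentralSeries ℝ 𝔫 𝔫 2 ↔
      (A : Matrix (Fin 4) (Fin 4) ℂ) ∈ LinearMap.range (wvMat ∘ₗ LinearMap.inl ℝ ℝ ℂ) := by
  constructor
  · suffices (lowerCentralSeries ℝ 𝔫 𝔫 2).toSubmodule ≤
        (LinearMap.range (wvMat ∘ₗ LinearMap.inl ℝ ℝ ℂ)).comap 𝔫.toSubmodule.subtype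
      from fun hA ↦ this hA
    rw [lowerCentralSeries_succ, LieSubmodule.lieIdeal_oper_eq_linear_span', Submodule.span_le]
    rintro _ ⟨⟨_, z, w, u, v, rfl⟩, -, m, hm, rfl⟩
    obtain ⟨⟨w', v'⟩, hm⟩ := (mem_lowerCentralSeries_one_iff m).1 hm
    refine ⟨2 * (star u * v').im, ?_⟩
    simp [wvMat, ← hm, lie_matL_zero_zero]
  · rintro ⟨w, hA⟩
    have hb : (⟨_, matL_mem_𝔫 0 0 0 (Complex.I * (w / 2))⟩ : 𝔫) ∈ lowerCentralSeries ℝ 𝔫 𝔫 1 :=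
      (mem_lowerCentralSeries_one_iff _).2 ⟨(0, _), rfl⟩
    have hA' :
        A = ⁅(⟨_, matL_mem_𝔫 0 0 1 0⟩ : 𝔫), ⟨_, matL_mem_𝔫 0 0 0 (Complex.I * (w / 2))⟩⁆ := by
      ext1
      rw [LieSubalgebra.coe_bracket, lie_matL_u_one]
      simpa [wvMat] using hA.symm
    rw [hA', lowerCentralSeries_succ]
    exact LieSubmodule.lie_mem_lie trivial hb

lemma lowerCentralSeries_three_eq_bot : lowerCentralSeries ℝ 𝔫 𝔫 3 = ⊥ := by
  rw [lowerCentralSeries_succ, eq_bot_iff, LieSubmodule.lie_le_iff]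
  rintro ⟨_, z, w, u, v, rfl⟩ - m hm
  obtain ⟨w', hm⟩ := (mem_lowerCentralSeries_two_iff m).1 hm
  rw [LieSubmodule.mem_bot]
  ext1
  simp [← hm, wvMat, lie_matL_zero_zero, matL_zero]

/-- `𝔫` is a nilpotent real Lie algebra, which is 3-step nilpotent:
`𝔫' = [𝔫,𝔫] = {A ∈ 𝔫 : u = 0, z = 0}` has dimension 3, `𝔫⁽²⁾ = [𝔫,𝔫'] = {A ∈ 𝔫 : u = v = 0,
z = 0}` has dimension 1, and `[𝔫,𝔫⁽²⁾] = 0`. -/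
theorem stmt4 :
    ∃ N : LieSubalgebra ℝ (Matrix (Fin 4) (Fin 4) ℂ),
      (N : Set (Matrix (Fin 4) (Fin 4) ℂ)) = Nset ∧
      LieRing.IsNilpotent N ∧
      ((LieModule.lowerCentralSeries ℝ N N 1 : Set N)
          = {A : N | ∃ (w : ℝ) (v : ℂ),
              (A : Matrix (Fin 4) (Fin 4) ℂ) = matL 0 0 0 w 0 v}) ∧
      Module.finrank ℝ (LieModule.lowerCentralSeries ℝ N N 1) = 3 ∧
      ((LieModule.lowerCentralSeries ℝ N N 2 : Set N)
          = {A : N | ∃ w : ℝ,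
              (A : Matrix (Fin 4) (Fin 4) ℂ) = matL 0 0 0 w 0 0}) ∧
      Module.finrank ℝ (LieModule.lowerCentralSeries ℝ N N 2) = 1 ∧
      LieModule.lowerCentralSeries ℝ N N 3 = ⊥ := by
  refine ⟨𝔫, rfl, .mk _ lowerCentralSeries_three_eq_bot,
    Set.ext fun A ↦ (mem_lowerCentralSeries_one_iff A).trans (mem_range_wvMat_iff A), ?_,
    Set.ext fun A ↦ (mem_lowerCentralSeries_two_iff A).trans (mem_range_wvMat_inl_iff A), ?_,
    lowerCentralSeries_three_eq_bot⟩
  · rw [LieSubmodule.finrank_eq_of_mem_iff_mem_range wvMat_injective range_wvMat_le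
      mem_lowerCentralSeries_one_iff, Module.finrank_prod, Complex.finrank_real_complex,
      Module.finrank_self]
  · rw [LieSubmodule.finrank_eq_of_mem_iff_mem_range (f := wvMat ∘ₗ LinearMap.inl ℝ ℝ ℂ)
      (wvMat_injective.comp LinearMap.inl_injective)
      ((LinearMap.range_comp_le_range _ _).trans range_wvMat_le)
      mem_lowerCentralSeries_two_iff, Module.finrank_self]
end
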